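/- Let G be a finite group, H ≤ G a subgroup, x_1 = 1, x_2, …, x_s a complete set of representatives for the double cosets of H in G, and let V be an irreducible finite-dimensional complex representation of G whose character χ_V takes only rational values and which satisfies dim_ℂ V^H = 1. Then for every i = 1, …, s the following eigenvalue identity holds in ℂ[G]: q_i · (p_H · e_V) = χ_V(q_i) · (p_H · e_V), where q_i := (1/|H|) · ∑_{y ∈ Hx_iH} y. -/

import Mathlib

/-!
Under `ρ`, `p_H` acts as a projection onto the line `V^H`, and `q_x` maps `V` into `V^H` because
`HxH` is stable under left multiplication by `H`. An endomorphism with range in a line `W`,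
composed with a projection onto `W`, is the projection scaled by its trace; hence
`ρ(q_x) ρ(p_H) = tr ρ(q_x) · ρ(p_H)`. Finally, the coefficient of `g` in `a · e_V` is
`(dim V / |G|) · tr(ρ(a) ρ(g⁻¹))`, so `a · e_V` only depends on `ρ(a)` and the identity lifts
to `ℂ[G]`.
-/

open scoped Classical

/-- The averaging idempotent `p_H = (1/|H|) ∑_{h ∈ H} h` in the complex group algebra. -/
noncomputable def avgIdemC {G : Type*} [Group G] [Fintype G] (H : Subgroup G) :
    MonoidAlgebra ℂ G :=
  (Nat.card H : ℂ)⁻¹ • ∑ h ∈ (H : Set G).toFinset, MonoidAlgebra.single h (1 : ℂ)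

/-- The double coset `HxH` as a finset. -/
noncomputable def dosetFinset {G : Type*} [Group G] [Fintype G] (H : Subgroup G) (x : G) :
    Finset G :=
  {y : G | ∃ h ∈ H, ∃ h' ∈ H, y = h * x * h'}.toFinset

/-- The character of a finite-dimensional representation. -/
noncomputable def repChar {G V : Type*} [Group G] [AddCommGroup V] [Module ℂ V]
    (ρ : Representation ℂ G V) (g : G) : ℂ :=
  LinearMap.trace ℂ V (ρ g)

/-- Irreducibility: `V` is nonzero and has no proper nonzero `G`-invariant subspace. -/
def IsIrreducibleRep {G V : Type*} [Group G] [AddCommGroup V] [Module ℂ V]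
    (ρ : Representation ℂ G V) : Prop :=
  Nontrivial V ∧ ∀ W : Submodule ℂ V, (∀ g : G, ∀ v ∈ W, ρ g v ∈ W) → W = ⊥ ∨ W = ⊤

/-- The subspace `V^H` of `H`-fixed vectors. -/
def fixedSubmodule {G V : Type*} [Group G] [AddCommGroup V] [Module ℂ V]
    (ρ : Representation ℂ G V) (H : Subgroup G) : Submodule ℂ V where
  carrier := {v : V | ∀ h ∈ H, ρ h v = v}
  add_mem' := by
    intro a b ha hb h hh
    simp [map_add, ha h hh, hb h hh]
  zero_mem' := by
    intro h hh
    simp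
  smul_mem' := by
    intro c v hv h hh
    simp [map_smul, hv h hh]

/-- The central idempotent `e_V = (dim V / |G|) ∑_{g} χ_V(g⁻¹) g` of `ℂ[G]`. -/
noncomputable def centralIdem {G V : Type*} [Group G] [Fintype G] [AddCommGroup V]
    [Module ℂ V] (ρ : Representation ℂ G V) : MonoidAlgebra ℂ G :=
  ((Module.finrank ℂ V : ℂ) / (Fintype.card G : ℂ)) •
    ∑ g : G, repChar ρ g⁻¹ • MonoidAlgebra.single g (1 : ℂ)

/-- The Hecke algebra basis element `q_x = (1/|H|) ∑_{y ∈ HxH} y`. -/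
noncomputable def heckeElt {G : Type*} [Group G] [Fintype G] (H : Subgroup G) (x : G) :
    MonoidAlgebra ℂ G :=
  (Nat.card H : ℂ)⁻¹ • ∑ y ∈ dosetFinset H x, MonoidAlgebra.single y (1 : ℂ)

section CentralIdem

variable {G V : Type*} [Group G] [Fintype G] [AddCommGroup V] [Module ℂ V]
  (ρ : Representation ℂ G V)

lemma coeff_centralIdem (g : G) :
    (centralIdem ρ).coeff g =
      (Module.finrank ℂ V : ℂ) / (Fintype.card G : ℂ) * repChar ρ g⁻¹ := by
  simp [centralIdem, MonoidAlgebra.coeff_sum, Finsupp.single_apply]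

lemma coeff_mul_centralIdem (a : MonoidAlgebra ℂ G) (g : G) :
    (a * centralIdem ρ).coeff g =
      (Module.finrank ℂ V : ℂ) / (Fintype.card G : ℂ) *
        LinearMap.trace ℂ V (ρ.asAlgebraHom a * ρ g⁻¹) := by
  induction a using MonoidAlgebra.induction_linear with
  | zero => simp
  | add a b ha hb => simp only [add_mul, MonoidAlgebra.coeff_add, Finsupp.add_apply, ha, hb,
      map_add, mul_add]
  | single h r =>
    rw [MonoidAlgebra.coeff_single_mul_apply, coeff_centralIdem,
      Representation.asAlgebraHom_single, smul_mul_assoc, map_smul, LinearMap.trace_mul_comm,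
      ← map_mul, repChar, mul_inv_rev, inv_inv, smul_eq_mul]
    ring

lemma mul_centralIdem_eq_of_asAlgebraHom_eq {a b : MonoidAlgebra ℂ G}
    (h : ρ.asAlgebraHom a = ρ.asAlgebraHom b) : a * centralIdem ρ = b * centralIdem ρ := by
  ext g
  rw [coeff_mul_centralIdem, coeff_mul_centralIdem, h]

end CentralIdem

theorem LinearMap.IsProj.mul_eq_trace_smul {K V : Type*} [Field K] [AddCommGroup V]
    [Module K V] [FiniteDimensional K V] {W : Submodule K V} {π T : V →ₗ[K] V}
    (hπ : LinearMap.IsProj W π) (hW : Module.finrank K W = 1) (hT : ∀ v, T v ∈ W) :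
    T * π = LinearMap.trace K V T • π := by
  obtain ⟨μ, hμ, -⟩ :=
    (T.restrict fun w _ ↦ hT w).existsUnique_eq_smul_id_of_finrank_eq_one hW
  have hTπ : T * π = μ • π := by
    ext v
    simpa using congr(Subtype.val ($hμ ⟨π v, hπ.map_mem v⟩))
  have hπT : π * T = T := LinearMap.ext fun v ↦ hπ.map_id _ (hT v)
  have htrace : LinearMap.trace K V T = μ := by
    rw [← hπT, LinearMap.trace_mul_comm, hTπ, map_smul, hπ.trace, hW, Nat.cast_one, smul_eq_mul,
      mul_one]
  rw [hTπ, htrace]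

section Hecke

variable {G : Type*} [Group G] [Fintype G] (H : Subgroup G)

lemma mem_dosetFinset {x y : G} : y ∈ dosetFinset H x ↔ ∃ a ∈ H, ∃ b ∈ H, y = a * x * b := by
  simp [dosetFinset]

lemma dosetFinset_one : dosetFinset H 1 = (H : Set G).toFinset := by
  ext y
  simp only [mem_dosetFinset, mul_one, Set.mem_toFinset, SetLike.mem_coe]
  exact ⟨fun ⟨a, ha, b, hb, hy⟩ ↦ hy ▸ H.mul_mem ha hb, fun hy ↦ ⟨y, hy, 1, H.one_mem, by simp⟩⟩

lemma heckeElt_one : heckeElt H 1 = avgIdemC H := by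
  rw [heckeElt, avgIdemC, dosetFinset_one]

lemma mul_mem_dosetFinset_iff {h : G} (hh : h ∈ H) {x y : G} :
    h * y ∈ dosetFinset H x ↔ y ∈ dosetFinset H x := by
  simp only [mem_dosetFinset]
  constructor
  · rintro ⟨a, ha, b, hb, hy⟩
    exact ⟨h⁻¹ * a, H.mul_mem (H.inv_mem hh) ha, b, hb, by rw [eq_inv_mul_of_mul_eq hy]; group⟩
  · rintro ⟨a, ha, b, hb, rfl⟩
    exact ⟨h * a, H.mul_mem hh ha, b, hb, by group⟩

variable {V : Type*} [AddCommGroup V] [Module ℂ V] (ρ : Representation ℂ G V)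

lemma asAlgebraHom_heckeElt (x : G) :
    ρ.asAlgebraHom (heckeElt H x) = (Nat.card H : ℂ)⁻¹ • ∑ y ∈ dosetFinset H x, ρ y := by
  simp [heckeElt, Representation.asAlgebraHom_single]

lemma trace_asAlgebraHom_heckeElt (x : G) :
    LinearMap.trace ℂ V (ρ.asAlgebraHom (heckeElt H x)) =
      (Nat.card H : ℂ)⁻¹ * ∑ y ∈ dosetFinset H x, repChar ρ y := by
  simp [asAlgebraHom_heckeElt, repChar]

lemma asAlgebraHom_heckeElt_apply_mem_fixedSubmodule (x : G) (v : V) :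
    ρ.asAlgebraHom (heckeElt H x) v ∈ fixedSubmodule ρ H := by
  intro h hh
  have hinv : ρ h * ∑ y ∈ dosetFinset H x, ρ y = ∑ y ∈ dosetFinset H x, ρ y := by
    simp only [Finset.mul_sum, ← map_mul]
    exact Finset.sum_equiv (Equiv.mulLeft h) (fun y ↦ (mul_mem_dosetFinset_iff H hh).symm)
      fun _ _ ↦ rfl
  rw [asAlgebraHom_heckeElt, LinearMap.smul_apply, map_smul, ← Module.End.mul_apply, hinv]

lemma isProj_asAlgebraHom_avgIdemC :
    LinearMap.IsProj (fixedSubmodule ρ H) (ρ.asAlgebraHom (avgIdemC H)) where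
  map_mem := heckeElt_one H ▸ asAlgebraHom_heckeElt_apply_mem_fixedSubmodule H ρ 1
  map_id v hv := by
    have hfix : ∀ h ∈ (H : Set G).toFinset, ρ h v = v := fun h hh ↦ hv h (by simpa using hh)
    have hcard : (Nat.card H : ℂ) ≠ 0 := Nat.cast_ne_zero.mpr Nat.card_pos.ne'
    rw [← heckeElt_one, asAlgebraHom_heckeElt, dosetFinset_one, LinearMap.smul_apply,
      LinearMap.sum_apply, Finset.sum_congr rfl hfix, Finset.sum_const,
      ← Nat.card_eq_card_toFinset, SetLike.coe_sort_coe, ← Nat.cast_smul_eq_nsmul ℂ, smul_smul,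
      inv_mul_cancel₀ hcard, one_smul]

end Hecke

theorem heckeElt_mul_isotypic_idem_general {G V : Type*} [Group G] [Fintype G]
    [AddCommGroup V] [Module ℂ V] [FiniteDimensional ℂ V]
    (ρ : Representation ℂ G V)
    (H : Subgroup G) (hfix : Module.finrank ℂ (fixedSubmodule ρ H) = 1)
    (s : ℕ) (x : Fin s → G) :
    ∀ i : Fin s,
      heckeElt H (x i) * (avgIdemC H * centralIdem ρ) =
        ((Nat.card H : ℂ)⁻¹ * ∑ y ∈ dosetFinset H (x i), repChar ρ y) •
          (avgIdemC H * centralIdem ρ) := by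
  intro i
  have hscalar := (isProj_asAlgebraHom_avgIdemC H ρ).mul_eq_trace_smul hfix
    (asAlgebraHom_heckeElt_apply_mem_fixedSubmodule H ρ (x i))
  rw [trace_asAlgebraHom_heckeElt, ← map_mul, ← map_smul] at hscalar
  rw [← mul_assoc, mul_centralIdem_eq_of_asAlgebraHom_eq ρ hscalar, smul_mul_assoc]

/-- If `V` is irreducible with rational-valued character and `dim V^H = 1`, then
for each `i`, `q_i · (p_H · e_V) = χ_V(q_i) · (p_H · e_V)` in `ℂ[G]`, where
`χ_V(q_i) = (1/|H|) ∑_{y ∈ H x_i H} χ_V(y)`. -/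
theorem heckeElt_mul_isotypic_idem {G V : Type*} [Group G] [Fintype G]
    [AddCommGroup V] [Module ℂ V] [FiniteDimensional ℂ V]
    (ρ : Representation ℂ G V) (hirr : IsIrreducibleRep ρ)
    (hrat : ∀ g : G, ∃ q : ℚ, repChar ρ g = (q : ℂ))
    (H : Subgroup G) (hfix : Module.finrank ℂ (fixedSubmodule ρ H) = 1)
    (s : ℕ) (hs : 0 < s) (x : Fin s → G) (hx1 : x ⟨0, hs⟩ = 1)
    (hreps : ∀ g : G, ∃! i : Fin s, ∃ h ∈ H, ∃ h' ∈ H, g = h * x i * h') :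
    ∀ i : Fin s,
      heckeElt H (x i) * (avgIdemC H * centralIdem ρ) =
        ((Nat.card H : ℂ)⁻¹ * ∑ y ∈ dosetFinset H (x i), repChar ρ y) •
          (avgIdemC H * centralIdem ρ) :=
  heckeElt_mul_isotypic_idem_general ρ H hfix s x
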